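/- For any programs P, Q and alphabets H, B ⊆ U: P ≡_{⟨H,B⟩} Q fails iff there exists a unary program R ∈ C_{⟨H,B⟩} such that AS(P∪R) ≠ AS(Q∪R). Moreover, if B = ∅, then P ≡_{⟨H,∅⟩} Q fails iff there exists a set F ⊆ H of facts with AS(P∪F) ≠ AS(Q∪F). -/

import Mathlib

structure Rule (α : Type*) where
  head : Finset α
  pbody : Finset α
  nbody : Finset α
deriving DecidableEq

abbrev Program (α : Type*) := Finset (Rule α)

variable {α : Type*} [DecidableEq α]

/-- An interpretation `Y` satisfies a rule. -/
def satRule (Y : Finset α) (r : Rule α) : Prop :=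
  r.pbody ⊆ Y → r.nbody ∩ Y = ∅ → (r.head ∩ Y).Nonempty

/-- `Y` is a model of the program `P`. -/
def satProg (Y : Finset α) (P : Program α) : Prop := ∀ r ∈ P, satRule Y r

/-- The Gelfond–Lifschitz reduct `P^Y`. -/
def reduct (P : Program α) (Y : Finset α) : Program α :=
  (P.filter (fun r => r.nbody ∩ Y = ∅)).image (fun r => ⟨r.head, r.pbody, ∅⟩)

/-- `Y` is an answer set of `P`: a minimal model of `P^Y`. -/
def isAS (P : Program α) (Y : Finset α) : Prop :=
  satProg Y (reduct P Y) ∧ ∀ Z, Z ⊂ Y → ¬ satProg Z (reduct P Y)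

def heads (P : Program α) : Finset α := P.biUnion Rule.head
def bodies (P : Program α) : Finset α := P.biUnion (fun r => r.pbody ∪ r.nbody)

/-- A positive program: no default negation. -/
def Positive (P : Program α) : Prop := ∀ r ∈ P, r.nbody = ∅

/-- A unary program: only facts `a ←` and rules `a ← b`. -/
def Unary (P : Program α) : Prop :=
  ∀ r ∈ P, r.nbody = ∅ ∧ r.head.card = 1 ∧ r.pbody.card ≤ 1

/-- Membership in the class `C_⟨H,B⟩`. -/
def inClass (H B : Finset α) (P : Program α) : Prop := heads P ⊆ H ∧ bodies P ⊆ B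

/-- `V ⪯_H^B Z`. -/
def preceq (H B V Z : Finset α) : Prop := V ∩ H ⊆ Z ∩ H ∧ Z ∩ B ⊆ V ∩ B

/-- `V ≺_H^B Z`. -/
def prec (H B V Z : Finset α) : Prop := preceq H B V Z ∧ V ∩ (H ∪ B) ≠ Z ∩ (H ∪ B)

/-- `Y` is an `H`-total model of `P`. -/
def Htotal (H : Finset α) (P : Program α) (Y : Finset α) : Prop :=
  satProg Y P ∧ ∀ Z, Z ⊂ Y → satProg Z (reduct P Y) → Z ∩ H ⊂ Y ∩ H

/-- The containment `P ⊆_⟨H,B⟩ Q`. -/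
def containsHB (H B : Finset α) (P Q : Program α) : Prop :=
  ∀ R : Program α, inClass H B R → ∀ Y, isAS (P ∪ R) Y → isAS (Q ∪ R) Y

/-- The equivalence `P ≡_⟨H,B⟩ Q`. -/
def equivHB (H B : Finset α) (P Q : Program α) : Prop :=
  ∀ R : Program α, inClass H B R → ∀ Y, isAS (P ∪ R) Y ↔ isAS (Q ∪ R) Y

/-- A witness against `P ⊆_⟨H,B⟩ Q`. -/
def Witness (H B : Finset α) (P Q : Program α) (X Y : Finset α) : Prop :=
  X ⊆ Y ∧ Htotal H P Y ∧
    (satProg Y Q → X ⊂ Y ∧ satProg X (reduct Q Y) ∧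
      ∀ X', preceq H B X X' → X' ⊂ Y → ¬ satProg X' (reduct P Y))

/-- `(X,Y)` is `⪯_H^B`-maximal for `P`. -/
def maximalHB (H B : Finset α) (P : Program α) (X Y : Finset α) : Prop :=
  satProg X (reduct P Y) ∧ ∀ X', prec H B X X' → X' ⊂ Y → ¬ satProg X' (reduct P Y)

/-- `(X,Y)` is an `⟨H,B⟩`-model of `P`. -/
def HBmodel (H B : Finset α) (P : Program α) (X Y : Finset α) : Prop :=
  X ⊆ Y ∧ Htotal H P Y ∧
    (X ⊂ Y → ∃ X', X' ⊂ Y ∧ X' ∩ (H ∪ B) = X ∧ maximalHB H B P X' Y)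

/-!
If `Y` separates `AS(P ∪ R)` from `AS(Q ∪ R)` for some `R ∈ C_⟨H,B⟩`, say `Y ∈ AS(P ∪ R)`, then
either `Y` violates `Q^Y`, or some `X ⊂ Y` is a model of `(Q ∪ R)^Y`. In both cases replace `R`
by the unary program consisting of the facts `X ∩ H` and all rules `a ← b` with
`a ∈ (Y \ X) ∩ H`, `b ∈ (Y \ X) ∩ B`. It is still satisfied by `X` and by `Y`, so `Y` is no answer
set of `Q` together with it. Conversely, a model `Z ⊂ Y` of it satisfies `R^Y`: if `Z` contains
some `b ∈ (Y \ X) ∩ B` then `Z ⊇ Y ∩ H`, and otherwise `Z ∩ B ⊆ X`, so `Z` inherits from `X` the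
heads of all rules of `R^Y` whose body it satisfies. Hence `Y` stays an answer set of `P` with it.
For `B = ∅` only the facts remain.
-/

def factsProgram (F : Finset α) : Program α := F.image (fun a => (⟨{a}, ∅, ∅⟩ : Rule α))

def linkProgram (A C : Finset α) : Program α :=
  (A ×ˢ C).image (fun p => (⟨{p.1}, {p.2}, ∅⟩ : Rule α))

def unaryProgram (H B X Y : Finset α) : Program α :=
  factsProgram (X ∩ H) ∪ linkProgram ((Y \ X) ∩ H) ((Y \ X) ∩ B)

lemma mem_reduct {r' : Rule α} {R : Program α} {Y : Finset α} :
    r' ∈ reduct R Y ↔ ∃ r ∈ R, r.nbody ∩ Y = ∅ ∧ r' = ⟨r.head, r.pbody, ∅⟩ := by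
  simp only [reduct, Finset.mem_image, Finset.mem_filter, and_assoc, eq_comm]

lemma reduct_union (P Q : Program α) (Y : Finset α) :
    reduct (P ∪ Q) Y = reduct P Y ∪ reduct Q Y := by
  simp only [reduct, Finset.filter_union, Finset.image_union]

lemma reduct_of_positive {R : Program α} (hR : Positive R) (Y : Finset α) : reduct R Y = R := by
  ext r'
  rw [mem_reduct]
  constructor
  · rintro ⟨r, hr, -, rfl⟩
    rwa [← hR r hr]
  · intro hr'
    exact ⟨r', hr', by simp [hR r' hr'], by rw [← hR r' hr']⟩

lemma positive_reduct (R : Program α) (Y : Finset α) : Positive (reduct R Y) := by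
  intro r' hr'
  obtain ⟨r, -, -, rfl⟩ := mem_reduct.1 hr'
  rfl

lemma inClass_reduct {H B : Finset α} {R : Program α} (hR : inClass H B R) (Y : Finset α) :
    inClass H B (reduct R Y) := by
  constructor <;> intro x hx <;>
    obtain ⟨r', hr', hx⟩ := Finset.mem_biUnion.1 hx <;>
    obtain ⟨r, hr, -, rfl⟩ := mem_reduct.1 hr'
  · exact hR.1 (Finset.mem_biUnion.2 ⟨r, hr, hx⟩)
  · exact hR.2 (Finset.mem_biUnion.2 ⟨r, hr, by simpa using Or.inl hx⟩)

section Satisfaction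

lemma Finset.singleton_inter_nonempty {a : α} {s : Finset α} : ({a} ∩ s).Nonempty ↔ a ∈ s := by
  simp [Finset.Nonempty]

lemma satProg_union {Z : Finset α} {P Q : Program α} :
    satProg Z (P ∪ Q) ↔ satProg Z P ∧ satProg Z Q := by
  simp only [satProg, Finset.mem_union, or_imp, forall_and]

lemma satProg_reduct_union {Z Y : Finset α} {P Q : Program α} :
    satProg Z (reduct (P ∪ Q) Y) ↔ satProg Z (reduct P Y) ∧ satProg Z (reduct Q Y) := by
  rw [reduct_union, satProg_union]

lemma satProg_factsProgram {Z F : Finset α} : satProg Z (factsProgram F) ↔ F ⊆ Z := by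
  simp [satProg, factsProgram, satRule, Finset.subset_iff, Finset.singleton_inter_nonempty]

lemma satProg_linkProgram {Z A C : Finset α} :
    satProg Z (linkProgram A C) ↔ ∀ a ∈ A, ∀ c ∈ C, c ∈ Z → a ∈ Z := by
  simp only [satProg, linkProgram, Finset.mem_image, Finset.mem_product, Prod.exists,
    forall_exists_index, and_imp]
  constructor
  · intro h a ha c hc hcZ
    simpa [satRule, hcZ, Finset.singleton_inter_nonempty] using h _ a c ha hc rfl
  · rintro h r a c ha hc rfl
    simpa [satRule, Finset.singleton_inter_nonempty] using h a ha c hc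

lemma satProg_unaryProgram {H B X Y Z : Finset α} :
    satProg Z (unaryProgram H B X Y) ↔
      X ∩ H ⊆ Z ∧ ∀ a ∈ (Y \ X) ∩ H, ∀ b ∈ (Y \ X) ∩ B, b ∈ Z → a ∈ Z := by
  rw [unaryProgram, satProg_union, satProg_factsProgram, satProg_linkProgram]

variable {H B X Y : Finset α}

lemma satProg_unaryProgram_left : satProg X (unaryProgram H B X Y) :=
  satProg_unaryProgram.2 ⟨Finset.inter_subset_left, fun _ _ _ hb hbX =>
    absurd hbX (Finset.mem_sdiff.1 (Finset.mem_inter.1 hb).1).2⟩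

lemma satProg_unaryProgram_right (hXY : X ⊆ Y) : satProg Y (unaryProgram H B X Y) :=
  satProg_unaryProgram.2 ⟨Finset.inter_subset_left.trans hXY, fun _ ha _ _ _ =>
    (Finset.mem_sdiff.1 (Finset.mem_inter.1 ha).1).1⟩

lemma satProg_of_satProg_unaryProgram {S : Program α} (hS : Positive S) (hSc : inClass H B S)
    (hX : satProg X S) (hY : satProg Y S) {Z : Finset α} (hZY : Z ⊆ Y)
    (hZ : satProg Z (unaryProgram H B X Y)) : satProg Z S := by
  obtain ⟨hfacts, hlinks⟩ := satProg_unaryProgram.1 hZ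
  have head_sub : ∀ r ∈ S, r.head ⊆ H := fun r hr x hx =>
    hSc.1 (Finset.mem_biUnion.2 ⟨r, hr, hx⟩)
  have pbody_sub : ∀ r ∈ S, r.pbody ⊆ B := fun r hr x hx =>
    hSc.2 (Finset.mem_biUnion.2 ⟨r, hr, Finset.mem_union_left _ hx⟩)
  intro r hr hpb _
  have hnb (W : Finset α) : r.nbody ∩ W = ∅ := by rw [hS r hr, Finset.empty_inter]
  by_cases hb : ∃ b ∈ Z, b ∈ (Y \ X) ∩ B
  · obtain ⟨b, hbZ, hb⟩ := hb
    obtain ⟨x, hx⟩ := hY r hr (hpb.trans hZY) (hnb Y)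
    obtain ⟨hxr, hxY⟩ := Finset.mem_inter.1 hx
    refine ⟨x, Finset.mem_inter.2 ⟨hxr, ?_⟩⟩
    by_cases hxX : x ∈ X
    · exact hfacts (Finset.mem_inter.2 ⟨hxX, head_sub r hr hxr⟩)
    · exact hlinks x (by simp [hxY, hxX, head_sub r hr hxr]) b hb hbZ
  · push Not at hb
    have hpbX : r.pbody ⊆ X := fun x hx => by
      by_contra hxX
      exact hb x (hpb hx) (by simp [hZY (hpb hx), hxX, pbody_sub r hr hx])
    obtain ⟨x, hx⟩ := hX r hr hpbX (hnb X)
    obtain ⟨hxr, hxX⟩ := Finset.mem_inter.1 hx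
    exact ⟨x, Finset.mem_inter.2 ⟨hxr, hfacts (Finset.mem_inter.2 ⟨hxX, head_sub r hr hxr⟩)⟩⟩

end Satisfaction

lemma positive_unaryProgram (H B X Y : Finset α) : Positive (unaryProgram H B X Y) := by
  intro r hr
  simp only [unaryProgram, Finset.mem_union, factsProgram, linkProgram, Finset.mem_image,
    Prod.exists] at hr
  rcases hr with ⟨a, -, rfl⟩ | ⟨a, b, -, rfl⟩ <;> rfl

lemma unary_unaryProgram (H B X Y : Finset α) : Unary (unaryProgram H B X Y) := by
  intro r hr
  simp only [unaryProgram, Finset.mem_union, factsProgram, linkProgram, Finset.mem_image,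
    Prod.exists] at hr
  rcases hr with ⟨a, -, rfl⟩ | ⟨a, b, -, rfl⟩ <;> simp

lemma inClass_factsProgram {H F : Finset α} (hF : F ⊆ H) (B : Finset α) :
    inClass H B (factsProgram F) := by
  simp only [inClass, heads, bodies, factsProgram, Finset.biUnion_subset, Finset.mem_image]
  constructor <;> rintro r ⟨a, ha, rfl⟩
  · exact Finset.singleton_subset_iff.2 (hF ha)
  · simp

lemma inClass_unaryProgram (H B X Y : Finset α) : inClass H B (unaryProgram H B X Y) := by
  simp only [inClass, heads, bodies, unaryProgram, factsProgram, linkProgram,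
    Finset.biUnion_subset, Finset.mem_union, Finset.mem_image, Finset.mem_product, Prod.exists]
  constructor <;> rintro r (⟨a, ha, rfl⟩ | ⟨a, b, ⟨ha, hb⟩, rfl⟩)
  · exact Finset.singleton_subset_iff.2 (Finset.mem_inter.1 ha).2
  · exact Finset.singleton_subset_iff.2 (Finset.mem_inter.1 ha).2
  · simp
  · simpa using (Finset.mem_inter.1 hb).2

lemma unaryProgram_empty (H X Y : Finset α) : unaryProgram H ∅ X Y = factsProgram (X ∩ H) := by
  simp [unaryProgram, linkProgram]

section AnswerSets

variable {P Q R : Program α} {H B X Y : Finset α}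

lemma satProg_reduct_of_isAS_union (h : isAS (P ∪ R) Y) :
    satProg Y (reduct P Y) ∧ satProg Y (reduct R Y) :=
  satProg_reduct_union.1 h.1

lemma isAS_union_unaryProgram (hR : inClass H B R) (hP : isAS (P ∪ R) Y) (hXY : X ⊆ Y)
    (hX : satProg X (reduct R Y)) : isAS (P ∪ unaryProgram H B X Y) Y := by
  simp only [isAS, satProg_reduct_union, reduct_of_positive (positive_unaryProgram H B X Y)]
  refine ⟨⟨(satProg_reduct_of_isAS_union hP).1, satProg_unaryProgram_right hXY⟩, ?_⟩
  rintro Z hZY ⟨hZP, hZU⟩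
  refine hP.2 Z hZY (satProg_reduct_union.2 ⟨hZP, ?_⟩)
  exact satProg_of_satProg_unaryProgram (positive_reduct R Y) (inClass_reduct hR Y) hX
    (satProg_reduct_of_isAS_union hP).2 hZY.subset hZU

lemma not_isAS_union_unaryProgram (hXY : X ⊂ Y) (hX : satProg X (reduct Q Y)) :
    ¬ isAS (Q ∪ unaryProgram H B X Y) Y := fun h =>
  h.2 X hXY (by
    rw [satProg_reduct_union, reduct_of_positive (positive_unaryProgram H B X Y)]
    exact ⟨hX, satProg_unaryProgram_left⟩)

lemma not_isAS_union_of_not_satProg (R : Program α) (hY : ¬ satProg Y (reduct Q Y)) :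
    ¬ isAS (Q ∪ R) Y := fun h => hY (satProg_reduct_of_isAS_union h).1

lemma exists_unaryProgram_of_isAS_of_not_isAS (hR : inClass H B R) (hP : isAS (P ∪ R) Y)
    (hQ : ¬ isAS (Q ∪ R) Y) :
    ∃ X, isAS (P ∪ unaryProgram H B X Y) Y ∧ ¬ isAS (Q ∪ unaryProgram H B X Y) Y := by
  have hRY := (satProg_reduct_of_isAS_union hP).2
  by_cases hQY : satProg Y (reduct Q Y)
  · obtain ⟨X, hXY, hX⟩ : ∃ X ⊂ Y, satProg X (reduct (Q ∪ R) Y) := by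
      simpa [isAS, satProg_reduct_union, hQY, hRY] using hQ
    rw [satProg_reduct_union] at hX
    exact ⟨X, isAS_union_unaryProgram hR hP hXY.subset hX.2,
      not_isAS_union_unaryProgram hXY hX.1⟩
  · exact ⟨Y, isAS_union_unaryProgram hR hP subset_rfl hRY,
      not_isAS_union_of_not_satProg _ hQY⟩

lemma exists_unaryProgram_of_not_equivHB (h : ¬ equivHB H B P Q) :
    ∃ X Y, ¬ (isAS (P ∪ unaryProgram H B X Y) Y ↔ isAS (Q ∪ unaryProgram H B X Y) Y) := by
  simp only [equivHB, not_forall] at h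
  obtain ⟨R, hR, Y, hY⟩ := h
  by_cases hP : isAS (P ∪ R) Y
  · obtain ⟨X, hPX, hQX⟩ :=
      exists_unaryProgram_of_isAS_of_not_isAS hR hP (by tauto : ¬ isAS (Q ∪ R) Y)
    exact ⟨X, Y, fun h => hQX (h.1 hPX)⟩
  · obtain ⟨X, hQX, hPX⟩ :=
      exists_unaryProgram_of_isAS_of_not_isAS hR (by tauto : isAS (Q ∪ R) Y) hP
    exact ⟨X, Y, fun h => hPX (h.2 hQX)⟩

lemma not_equivHB_of_not_iff (hR : inClass H B R) (hY : ¬ (isAS (P ∪ R) Y ↔ isAS (Q ∪ R) Y)) :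
    ¬ equivHB H B P Q :=
  fun h => hY (h R hR Y)

end AnswerSets

theorem cor_unary_general (P Q : Program α) (H B : Finset α) :
    (¬ equivHB H B P Q ↔
      ∃ R : Program α, Unary R ∧ inClass H B R ∧
        ∃ Y, ¬ (isAS (P ∪ R) Y ↔ isAS (Q ∪ R) Y)) ∧
    (B = ∅ → (¬ equivHB H B P Q ↔
      ∃ F ⊆ H, ∃ Y,
        ¬ (isAS (P ∪ F.image (fun a => (⟨{a}, ∅, ∅⟩ : Rule α))) Y ↔
           isAS (Q ∪ F.image (fun a => (⟨{a}, ∅, ∅⟩ : Rule α))) Y))) := by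
  refine ⟨⟨fun h => ?_, fun ⟨R, _, hR, Y, hY⟩ => not_equivHB_of_not_iff hR hY⟩, ?_⟩
  · obtain ⟨X, Y, hY⟩ := exists_unaryProgram_of_not_equivHB h
    exact ⟨_, unary_unaryProgram H B X Y, inClass_unaryProgram H B X Y, Y, hY⟩
  · rintro rfl
    refine ⟨fun h => ?_, fun ⟨F, hF, Y, hY⟩ =>
      not_equivHB_of_not_iff (inClass_factsProgram hF ∅) hY⟩
    obtain ⟨X, Y, hY⟩ := exists_unaryProgram_of_not_equivHB h
    rw [unaryProgram_empty] at hY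
    exact ⟨X ∩ H, Finset.inter_subset_right, Y, hY⟩

theorem cor_unary [Fintype α] (P Q : Program α) (H B : Finset α) :
    (¬ equivHB H B P Q ↔
      ∃ R : Program α, Unary R ∧ inClass H B R ∧
        ∃ Y, ¬ (isAS (P ∪ R) Y ↔ isAS (Q ∪ R) Y)) ∧
    (B = ∅ → (¬ equivHB H B P Q ↔
      ∃ F ⊆ H, ∃ Y,
        ¬ (isAS (P ∪ F.image (fun a => (⟨{a}, ∅, ∅⟩ : Rule α))) Y ↔
           isAS (Q ∪ F.image (fun a => (⟨{a}, ∅, ∅⟩ : Rule α))) Y))) :=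
  cor_unary_general P Q H B
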